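/- For any three-candidate single-winner instant-runoff election in which candidate W wins, adding any number of identical ballots that rank W first cannot make W lose. (Positive involvement holds for IRV with three candidates.) -/

import Mathlib

/-- The three candidates. -/
inductive Cand : Type
  | F | G | M
deriving DecidableEq, Repr

/-- A three-candidate profile, recording the number of voters casting each of the
nine possible (possibly truncated) ballot types: e.g. `fgm` is the number of
ballots `F ≻ G ≻ M` and `f` the number of bullet votes for `F`. -/
structure Profile3 where
  fgm : ℕ
  fmg : ℕ
  f   : ℕ
  gfm : ℕ
  gmf : ℕ
  g   : ℕ
  mfg : ℕ
  mgf : ℕ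
  m   : ℕ
deriving DecidableEq, Repr

namespace Profile3

/-- First-place votes for `F`. -/
def firstF (p : Profile3) : ℕ := p.fgm + p.fmg + p.f
/-- First-place votes for `G`. -/
def firstG (p : Profile3) : ℕ := p.gfm + p.gmf + p.g
/-- First-place votes for `M`. -/
def firstM (p : Profile3) : ℕ := p.mfg + p.mgf + p.m

/-- Instant-runoff winner: the candidate with the fewest first-place votes is
eliminated (ties broken by eliminating `F` before `G` before `M`), their ballots
transfer to the next remaining ranked candidate (ballots ranking no remaining
candidate are exhausted), and the winner is the candidate with more votes in the
final head-to-head (ties broken `F`, then `G`, then `M`). -/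
def winner (p : Profile3) : Cand :=
  if p.firstF ≤ p.firstG ∧ p.firstF ≤ p.firstM then
    -- F is eliminated first
    if p.firstM + p.fmg > p.firstG + p.fgm then Cand.M else Cand.G
  else if p.firstG ≤ p.firstM then
    -- G is eliminated first
    if p.firstM + p.gmf > p.firstF + p.gfm then Cand.M else Cand.F
  else
    -- M is eliminated first
    if p.firstG + p.mgf > p.firstF + p.mfg then Cand.G else Cand.F

end Profile3

/-- The nine ballot types on three candidates. -/
inductive BType : Type
  | fgm | fmg | f | gfm | gmf | g | mfg | mgf | m
deriving DecidableEq, Repr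

/-- The candidate ranked first on a ballot type. -/
def BType.top : BType → Cand
  | .fgm => Cand.F | .fmg => Cand.F | .f => Cand.F
  | .gfm => Cand.G | .gmf => Cand.G | .g => Cand.G
  | .mfg => Cand.M | .mgf => Cand.M | .m => Cand.M

/-- Add `k` identical ballots of type `b` to a profile. -/
def Profile3.add (p : Profile3) (b : BType) (k : ℕ) : Profile3 :=
  match b with
  | .fgm => { p with fgm := p.fgm + k }
  | .fmg => { p with fmg := p.fmg + k }
  | .f   => { p with f   := p.f + k }
  | .gfm => { p with gfm := p.gfm + k }
  | .gmf => { p with gmf := p.gmf + k }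
  | .g   => { p with g   := p.g + k }
  | .mfg => { p with mfg := p.mfg + k }
  | .mgf => { p with mgf := p.mgf + k }
  | .m   => { p with m   := p.m + k }

set_option maxHeartbeats 4000000 in
/-- Positive involvement holds for three-candidate IRV: if `W` wins profile `p`,
then adding any number `k` of identical ballots that rank `W` first cannot make
`W` lose. -/
theorem irv3_positive_involvement (p : Profile3) (W : Cand) (b : BType) (k : ℕ)
    (htop : b.top = W) (hwin : p.winner = W) : (p.add b k).winner = W := by
  subst htop
  cases b <;>
    simp only [BType.top, Profile3.winner] at hwin ⊢ <;>
    split_ifs at hwin ⊢ <;>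
    simp only [Profile3.add, Profile3.firstF, Profile3.firstG, Profile3.firstM] at * <;>
    first
      | rfl
      | omega
      | exact absurd hwin (by decide)
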